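/- If w ∈ S_n has a reduced word s_{i_1}⋯s_{i_r} with all indices i_1,...,i_r pairwise distinct, then the Kazhdan–Lusztig polynomial P_{x,w} equals 1 for all x ≤ w in Bruhat order. -/

import Mathlib

open Polynomial

/-- The simple transposition `s_i = (i, i+1)` (1-based) in `S_n`, acting on `Fin n`
(0-based positions `i-1` and `i`); equals `1` if `i` is out of range. -/
def gen (n : ℕ) (i : ℕ) : Equiv.Perm (Fin n) :=
  if h : 1 ≤ i ∧ i < n then Equiv.swap ⟨i - 1, by omega⟩ ⟨i, h.2⟩ else 1

/-- Product of the word `l` of generator indices. -/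
def wordProd (n : ℕ) (l : List ℕ) : Equiv.Perm (Fin n) :=
  (l.map (gen n)).prod

/-- Coxeter length of `w ∈ S_n`. -/
noncomputable def len (n : ℕ) (w : Equiv.Perm (Fin n)) : ℕ :=
  sInf {r | ∃ l : List ℕ, (∀ i ∈ l, 1 ≤ i ∧ i < n) ∧ wordProd n l = w ∧ l.length = r}

/-- `l` is a reduced word for `w`. -/
def IsReducedWord (n : ℕ) (w : Equiv.Perm (Fin n)) (l : List ℕ) : Prop :=
  (∀ i ∈ l, 1 ≤ i ∧ i < n) ∧ wordProd n l = w ∧ l.length = len n w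

/-- Bruhat-Chevalley order: `x ≤ w` iff every reduced word for `w` contains a
subword whose product is `x`. -/
def Bruhat (n : ℕ) (x w : Equiv.Perm (Fin n)) : Prop :=
  ∀ l, IsReducedWord n w l → ∃ t, t.Sublist l ∧ wordProd n t = x

/-- `w` is 321-avoiding: no `i < j < k` with `w i > w j > w k`. -/
def Avoids321 (n : ℕ) (w : Equiv.Perm (Fin n)) : Prop :=
  ¬ ∃ i j k : Fin n, i < j ∧ j < k ∧ w j < w i ∧ w k < w j

/-- Product of the subword of `l` selected by the mask `S` (set of selected positions). -/
def maskProd (n : ℕ) (l : List ℕ) (S : Finset ℕ) : Equiv.Perm (Fin n) :=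
  wordProd n (((List.range l.length).filter (fun j => decide (j ∈ S))).map (fun j => l.getD j 0))

/-- Position `j` of the word `l` is a defect of the mask `S`. -/
noncomputable def IsDefect (n : ℕ) (l : List ℕ) (S : Finset ℕ) (j : ℕ) : Prop :=
  len n (maskProd n (l.take j) S * gen n (l.getD j 0)) < len n (maskProd n (l.take j) S)

/-- The defect set `D(σ)` of the mask `S` on the word `l`. -/
noncomputable def defectSet (n : ℕ) (l : List ℕ) (S : Finset ℕ) : Finset ℕ :=
  (Finset.range l.length).filter (fun j =>
    len n (maskProd n (l.take j) S * gen n (l.getD j 0)) < len n (maskProd n (l.take j) S))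

/-- Deodhar's defect generating polynomial `P_x(a) = Σ_{σ : π(w^σ) = x} q^{|D(σ)|}`. -/
noncomputable def defPoly (n : ℕ) (l : List ℕ) (x : Equiv.Perm (Fin n)) : Polynomial ℤ :=
  ∑ S ∈ (Finset.range l.length).powerset,
    if maskProd n l S = x then (X : Polynomial ℤ) ^ (defectSet n l S).card else 0

/-!
A word with distinct letters is reduced, and its product determines its set of letters (`s_i`
occurs iff the product does not preserve `{0, …, i-1}`) and the relative order of any two
adjacent letters `j, j+1`. Conversely these data determine the product, because non-adjacent
generators commute. So every reduced word of `w` is a rearrangement of `l` that induces the same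
products on subwords, and for `x` the product of a subword `t` of `l` the Bruhat interval `[x, w]`
is the Boolean lattice of subwords between `t` and `l`, on which `R_{x,y} = (q - 1)^{ℓ(y) - ℓ(x)}`.
By induction on `d = ℓ(w) - ℓ(x)` the bar-invariance equation becomes
`q^d P_{x,w}(q⁻¹) = q^d + P_{x,w} - 1`, and the degree bound `deg P_{x,w} < d / 2` forces
`P_{x,w} = 1`.
-/

section

variable {n : ℕ}

theorem wordProd_nil : wordProd n [] = 1 := rfl

theorem wordProd_cons (a : ℕ) (l : List ℕ) : wordProd n (a :: l) = gen n a * wordProd n l := by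
  simp [wordProd]

theorem wordProd_append (l₁ l₂ : List ℕ) :
    wordProd n (l₁ ++ l₂) = wordProd n l₁ * wordProd n l₂ := by
  simp [wordProd]

theorem wordProd_concat (l : List ℕ) (a : ℕ) : wordProd n (l ++ [a]) = wordProd n l * gen n a := by
  simp [wordProd]

theorem gen_mul_self (i : ℕ) : gen n i * gen n i = 1 := by
  unfold gen
  split <;> simp

theorem gen_apply_left {i : ℕ} (h1 : 1 ≤ i) (h2 : i < n) :
    gen n i ⟨i - 1, by omega⟩ = ⟨i, h2⟩ := by
  simp [gen, h1, h2]

theorem gen_apply_right {i : ℕ} (h1 : 1 ≤ i) (h2 : i < n) :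
    gen n i ⟨i, h2⟩ = ⟨i - 1, by omega⟩ := by
  simp [gen, h1, h2]

theorem gen_apply_of_ne {i : ℕ} {x : Fin n} (h1 : x.val ≠ i - 1) (h2 : x.val ≠ i) :
    gen n i x = x := by
  unfold gen
  split
  · exact Equiv.swap_apply_of_ne_of_ne (fun h => h1 (by rw [h])) (fun h => h2 (by rw [h]))
  · rfl

theorem gen_mul_comm {a b : ℕ} (h : a + 1 < b ∨ b + 1 < a) :
    gen n a * gen n b = gen n b * gen n a := by
  unfold gen
  split_ifs with ha hb
  · refine Equiv.Perm.Disjoint.commute fun x => ?_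
    by_cases hx : x.val = a - 1 ∨ x.val = a
    · right
      exact Equiv.swap_apply_of_ne_of_ne (by rintro rfl; simp at hx; omega)
        (by rintro rfl; simp at hx; omega)
    · left
      exact Equiv.swap_apply_of_ne_of_ne (by rintro rfl; simp at hx)
        (by rintro rfl; simp at hx)
  all_goals simp

theorem wordProd_mul_gen_comm {a : ℕ} {b : List ℕ} (hb : ∀ x ∈ b, x + 1 < a ∨ a + 1 < x) :
    wordProd n b * gen n a = gen n a * wordProd n b := by
  induction b with
  | nil => simp [wordProd_nil]
  | cons c b ih =>
    rw [wordProd_cons, mul_assoc, ih fun x hx => hb x (List.mem_cons_of_mem _ hx), ← mul_assoc,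
      gen_mul_comm (hb c List.mem_cons_self), mul_assoc]

def ValidWord (n : ℕ) (l : List ℕ) : Prop := ∀ i ∈ l, 1 ≤ i ∧ i < n

theorem ValidWord.sublist {s l : List ℕ} (hl : ValidWord n l) (h : s.Sublist l) : ValidWord n s :=
  fun i hi => hl i (h.mem hi)

theorem wordProd_apply_eq_self {j : ℕ} {c : List ℕ} (hv : ValidWord n c) (h : j ∉ c)
    (h' : j + 1 ∉ c) (hj : j < n) : wordProd n c ⟨j, hj⟩ = ⟨j, hj⟩ := by
  induction c with
  | nil => rfl
  | cons a c ih =>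
    have ha := (hv a List.mem_cons_self).1
    have hne : a ≠ j := fun haj => h (haj ▸ List.mem_cons_self)
    have hne' : a ≠ j + 1 := fun haj => h' (haj ▸ List.mem_cons_self)
    rw [wordProd_cons, Equiv.Perm.mul_apply, ih (hv.sublist (List.sublist_cons_self a c))
      (fun hc => h (List.mem_cons_of_mem a hc)) (fun hc => h' (List.mem_cons_of_mem a hc))]
    exact gen_apply_of_ne (by simp only; omega) (by simp only; omega)

def PreservesBelow (n i : ℕ) (p : Equiv.Perm (Fin n)) : Prop :=
  ∀ x : Fin n, (p x).val < i ↔ x.val < i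

theorem PreservesBelow.mul {i : ℕ} {p q : Equiv.Perm (Fin n)} (hp : PreservesBelow n i p)
    (hq : PreservesBelow n i q) : PreservesBelow n i (p * q) :=
  fun x => (hp (q x)).trans (hq x)

theorem preservesBelow_gen {i j : ℕ} (h : j ≠ i) : PreservesBelow n i (gen n j) := by
  intro x
  unfold gen
  split
  · rcases eq_or_ne x ⟨j - 1, by omega⟩ with rfl | hx1
    · simp; omega
    rcases eq_or_ne x ⟨j, by omega⟩ with rfl | hx2
    · simp; omega
    rw [Equiv.swap_apply_of_ne_of_ne hx1 hx2]
  · rfl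

theorem preservesBelow_wordProd {i : ℕ} {l : List ℕ} (h : i ∉ l) :
    PreservesBelow n i (wordProd n l) := by
  induction l with
  | nil => exact fun _ => Iff.rfl
  | cons a l ih =>
    rw [wordProd_cons]
    exact (preservesBelow_gen fun hai => h (by simp [hai])).mul
      (ih fun hi => h (List.mem_cons_of_mem _ hi))

theorem not_preservesBelow_wordProd {i : ℕ} {t : List ℕ} (ht : t.Nodup) (hv : ValidWord n t)
    (hi : i ∈ t) : ¬ PreservesBelow n i (wordProd n t) := by
  obtain ⟨a, b, rfl⟩ := List.append_of_mem hi
  obtain ⟨h1, h2⟩ := hv i hi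
  have hib : i ∉ a ++ b := (List.nodup_cons.1 (List.nodup_middle.1 ht)).1
  have ha := preservesBelow_wordProd (n := n) fun h => hib (List.mem_append_left b h)
  have hb := preservesBelow_wordProd (n := n) fun h => hib (List.mem_append_right a h)
  set x := (wordProd n b).symm ⟨i - 1, by omega⟩
  have hx : x.val < i := (hb x).1 (by simp [x]; omega)
  intro hw
  have hwx := (hw x).2 hx
  rw [wordProd_append, wordProd_cons] at hwx
  simp only [Equiv.Perm.mul_apply, x, Equiv.apply_symm_apply, gen_apply_left h1 h2] at hwx
  exact absurd ((ha _).1 hwx) (lt_irrefl i)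

theorem mem_of_wordProd_eq {s t : List ℕ} (ht : t.Nodup) (hv : ValidWord n t)
    (h : wordProd n s = wordProd n t) : t ⊆ s := fun i hi => by
  by_contra his
  exact not_preservesBelow_wordProd ht hv hi (h ▸ preservesBelow_wordProd his)

theorem mem_iff_of_wordProd_eq {s t : List ℕ} (hs : s.Nodup) (hvs : ValidWord n s) (ht : t.Nodup)
    (hvt : ValidWord n t) (h : wordProd n s = wordProd n t) (i : ℕ) : i ∈ s ↔ i ∈ t :=
  ⟨fun hi => mem_of_wordProd_eq hs hvs h.symm hi, fun hi => mem_of_wordProd_eq ht hvt h hi⟩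

theorem len_wordProd_of_nodup {t : List ℕ} (ht : t.Nodup) (hv : ValidWord n t) :
    len n (wordProd n t) = t.length := by
  refine le_antisymm (Nat.sInf_le ⟨t, hv, rfl, rfl⟩) (le_csInf ⟨_, t, hv, rfl, rfl⟩ ?_)
  rintro _ ⟨s, -, hs, rfl⟩
  exact (ht.subperm (mem_of_wordProd_eq ht hv hs)).length_le

theorem isReducedWord_of_nodup {t : List ℕ} (ht : t.Nodup) (hv : ValidWord n t) :
    IsReducedWord n (wordProd n t) t :=
  ⟨hv, rfl, (len_wordProd_of_nodup ht hv).symm⟩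

theorem IsReducedWord.perm_of_nodup {l s : List ℕ} (hl : l.Nodup) (hv : ValidWord n l)
    (hs : IsReducedWord n (wordProd n l) s) : l.Perm s :=
  (hl.subperm (mem_of_wordProd_eq hl hv hs.2.1)).perm_of_length_le
    (by rw [hs.2.2, len_wordProd_of_nodup hl hv])

section PairSublist

variable {α : Type*}

theorem pair_sublist_or_pair_sublist {a b : α} {t : List α} (ha : a ∈ t) (hb : b ∈ t)
    (hab : a ≠ b) : [a, b].Sublist t ∨ [b, a].Sublist t := by
  obtain ⟨p, c, rfl⟩ := List.append_of_mem ha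
  rcases List.mem_append.1 hb with hbp | hbc
  · exact Or.inr ((List.singleton_sublist.2 hbp).append
      (List.singleton_sublist.2 List.mem_cons_self))
  · have hbc : b ∈ c := (List.mem_cons.1 hbc).resolve_left hab.symm
    exact Or.inl ((List.cons_sublist_cons.2 (List.singleton_sublist.2 hbc)).trans
      (List.sublist_append_right p _))

theorem exists_eq_append_cons_of_pair_sublist {a b : α} {t : List α} (h : [a, b].Sublist t) :
    ∃ p c, t = p ++ b :: c ∧ a ∈ p := by
  obtain ⟨r₁, r₂, rfl, ha, hb⟩ := List.cons_sublist_iff.1 h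
  obtain ⟨s, c, rfl⟩ := List.append_of_mem (List.singleton_sublist.1 hb)
  exact ⟨r₁ ++ s, c, by simp, List.mem_append_left _ ha⟩

theorem not_pair_sublist_of_pair_sublist {a b : α} {t : List α} (ht : t.Nodup)
    (h : [a, b].Sublist t) : ¬ [b, a].Sublist t := by
  obtain ⟨p, c, rfl, ha⟩ := exists_eq_append_cons_of_pair_sublist h
  have hdisj := (List.nodup_append.1 ht).2.2
  intro hba
  obtain ⟨l₁, l₂, hl, h₁, h₂⟩ := List.sublist_append_iff.1 hba
  rcases l₁ with _ | ⟨x, l₁⟩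
  · rw [List.nil_append] at hl
    exact hdisj a ha a (h₂.subset (by simp [← hl])) rfl
  · obtain ⟨rfl, -⟩ := List.cons_eq_cons.1 hl
    exact hdisj b (h₁.subset List.mem_cons_self) b List.mem_cons_self rfl

theorem sublist_append_cons_iff {a : α} {s b c : List α} (ha : a ∉ s) :
    s.Sublist (b ++ a :: c) ↔ s.Sublist (b ++ c) := by
  refine ⟨fun h => ?_, fun h => h.trans ((List.sublist_cons_self a c).append_left b)⟩
  obtain ⟨l₁, l₂, rfl, h₁, h₂⟩ := List.sublist_append_iff.1 h
  refine h₁.append ((List.sublist_cons_iff.1 h₂).resolve_right ?_)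
  rintro ⟨r, rfl, -⟩
  exact ha (by simp)

theorem pair_sublist_filter_iff {p : α → Bool} {a b : α} {l : List α} :
    [a, b].Sublist (l.filter p) ↔ p a ∧ p b ∧ [a, b].Sublist l := by
  refine ⟨fun h => ⟨(List.mem_filter.1 (h.subset (by simp))).2,
    (List.mem_filter.1 (h.subset (by simp))).2, h.trans List.filter_sublist⟩, ?_⟩
  rintro ⟨ha, hb, h⟩
  simpa [ha, hb] using h.filter p

end PairSublist

-- Position `j` of `Fin n` is moved only by `s_j` and `s_{j+1}`; whichever of the two comes last in
-- the word decides on which side of `j` its image lies.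
theorem lt_wordProd_apply_of_pair_sublist {t : List ℕ} {j : ℕ} (ht : t.Nodup) (hv : ValidWord n t)
    (h : [j, j + 1].Sublist t) (hj : j < n) : j < (wordProd n t ⟨j, hj⟩).val := by
  obtain ⟨p, c, rfl, hjp⟩ := exists_eq_append_cons_of_pair_sublist h
  obtain ⟨-, hj1⟩ := hv (j + 1) (by simp)
  obtain ⟨hjpc, hndpc⟩ := List.nodup_cons.1 (List.nodup_middle.1 ht)
  have hgen : gen n (j + 1) ⟨j, hj⟩ = ⟨j + 1, hj1⟩ := by
    simpa using gen_apply_left (n := n) (i := j + 1) (by omega) hj1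
  rw [wordProd_append, wordProd_cons, Equiv.Perm.mul_apply, Equiv.Perm.mul_apply,
    wordProd_apply_eq_self (hv.sublist (by simp)) (List.disjoint_of_nodup_append hndpc hjp)
      (fun h => hjpc (List.mem_append_right p h)), hgen]
  have := (preservesBelow_wordProd (n := n) fun h => hjpc (List.mem_append_left c h)) ⟨j + 1, hj1⟩
  simp only [lt_irrefl, iff_false, not_lt] at this
  omega

theorem wordProd_apply_lt_of_pair_sublist {t : List ℕ} {j : ℕ} (ht : t.Nodup) (hv : ValidWord n t)
    (h : [j + 1, j].Sublist t) (hj : j < n) : (wordProd n t ⟨j, hj⟩).val < j := by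
  obtain ⟨p, c, rfl, hjp⟩ := exists_eq_append_cons_of_pair_sublist h
  obtain ⟨hj1, -⟩ := hv j (by simp)
  obtain ⟨hjpc, hndpc⟩ := List.nodup_cons.1 (List.nodup_middle.1 ht)
  rw [wordProd_append, wordProd_cons, Equiv.Perm.mul_apply, Equiv.Perm.mul_apply,
    wordProd_apply_eq_self (hv.sublist (by simp)) (fun h => hjpc (List.mem_append_right p h))
      (List.disjoint_of_nodup_append hndpc hjp), gen_apply_right hj1 hj]
  exact ((preservesBelow_wordProd fun h => hjpc (List.mem_append_left c h)) _).2 (by simp; omega)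

def SameAdjacentOrder (s t : List ℕ) : Prop :=
  ∀ a b, a + 1 = b ∨ b + 1 = a → ([a, b].Sublist s ↔ [a, b].Sublist t)

theorem pair_sublist_of_wordProd_eq {s t : List ℕ} (hs : s.Nodup) (hvs : ValidWord n s)
    (ht : t.Nodup) (hvt : ValidWord n t) (h : wordProd n s = wordProd n t) {a b : ℕ}
    (hab : a + 1 = b ∨ b + 1 = a) (hsab : [a, b].Sublist s) : [a, b].Sublist t := by
  have hmem := mem_iff_of_wordProd_eq hs hvs ht hvt h
  refine (pair_sublist_or_pair_sublist ((hmem a).1 (hsab.subset (by simp)))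
    ((hmem b).1 (hsab.subset (by simp))) (by omega)).resolve_right fun htba => ?_
  have hb := (hvs b (hsab.subset (by simp))).2
  have ha := (hvs a (hsab.subset (by simp))).2
  rcases hab with rfl | rfl
  · have h₁ := lt_wordProd_apply_of_pair_sublist hs hvs hsab (by omega)
    have h₂ := wordProd_apply_lt_of_pair_sublist ht hvt htba (by omega)
    rw [h] at h₁
    omega
  · have h₁ := wordProd_apply_lt_of_pair_sublist hs hvs hsab hb
    have h₂ := lt_wordProd_apply_of_pair_sublist ht hvt htba hb
    rw [h] at h₁
    omega

theorem sameAdjacentOrder_of_wordProd_eq {s t : List ℕ} (hs : s.Nodup) (hvs : ValidWord n s)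
    (ht : t.Nodup) (hvt : ValidWord n t) (h : wordProd n s = wordProd n t) :
    SameAdjacentOrder s t := fun _ _ hab =>
  ⟨pair_sublist_of_wordProd_eq hs hvs ht hvt h hab,
    pair_sublist_of_wordProd_eq ht hvt hs hvs h.symm hab⟩

theorem SameAdjacentOrder.filter {s t : List ℕ} (h : SameAdjacentOrder s t) (p : ℕ → Bool) :
    SameAdjacentOrder (s.filter p) (t.filter p) := fun a b hab => by
  simp only [pair_sublist_filter_iff, h a b hab]

theorem wordProd_eq_of_sameAdjacentOrder {s t : List ℕ} (hs : s.Nodup) (ht : t.Nodup)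
    (hmem : ∀ i, i ∈ s ↔ i ∈ t) (hord : SameAdjacentOrder s t) : wordProd n s = wordProd n t := by
  induction s generalizing t with
  | nil =>
    obtain rfl : t = [] := List.eq_nil_iff_forall_not_mem.2 fun i hi => by simpa using (hmem i).2 hi
    rfl
  | cons a r ih =>
    obtain ⟨b, c, rfl⟩ := List.append_of_mem ((hmem a).1 List.mem_cons_self)
    have har : a ∉ r := (List.nodup_cons.1 hs).1
    have habc : a ∉ b ++ c := (List.nodup_cons.1 (List.nodup_middle.1 ht)).1
    have hmem' : ∀ i, i ∈ r ↔ i ∈ b ++ c := fun i => by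
      by_cases hia : i = a
      · exact hia ▸ iff_of_false har habc
      · simpa [hia] using hmem i
    have hfar : ∀ x ∈ b, x + 1 < a ∨ a + 1 < x := fun x hx => by
      by_contra hadj
      have hxr : x ∈ r := (hmem' x).2 (List.mem_append_left c hx)
      have hxa : x ≠ a := fun h => har (h ▸ hxr)
      have hxat : [x, a].Sublist (b ++ a :: c) :=
        (List.singleton_sublist.2 hx).append (List.singleton_sublist.2 List.mem_cons_self)
      exact not_pair_sublist_of_pair_sublist hs
        (List.cons_sublist_cons.2 (List.singleton_sublist.2 hxr)) ((hord x a (by omega)).2 hxat)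
    rw [wordProd_cons, wordProd_append, wordProd_cons, ← mul_assoc, wordProd_mul_gen_comm hfar,
      mul_assoc, ← wordProd_append]
    refine congrArg _ (ih hs.of_cons (List.nodup_middle.1 ht).of_cons hmem' fun x y hxy => ?_)
    by_cases ha : a ∈ [x, y]
    · exact iff_of_false (fun h => har (h.subset ha)) (fun h => habc (h.subset ha))
    · have hcons := sublist_append_cons_iff (b := []) (c := r) ha
      rw [List.nil_append, List.nil_append] at hcons
      rw [← hcons, ← sublist_append_cons_iff ha]
      exact hord x y hxy

theorem wordProd_filter_eq_of_wordProd_eq {s t : List ℕ} (hs : s.Nodup) (hvs : ValidWord n s)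
    (ht : t.Nodup) (hvt : ValidWord n t) (h : wordProd n s = wordProd n t) (p : ℕ → Bool) :
    wordProd n (s.filter p) = wordProd n (t.filter p) :=
  wordProd_eq_of_sameAdjacentOrder (hs.filter p) (ht.filter p)
    (fun i => by simp [mem_iff_of_wordProd_eq hs hvs ht hvt h i])
    ((sameAdjacentOrder_of_wordProd_eq hs hvs ht hvt h).filter p)

theorem List.Sublist.filter_mem_eq {α : Type*} [DecidableEq α] {u l : List α} (h : u.Sublist l)
    (hl : l.Nodup) : l.filter (· ∈ u) = u := by
  have hsub := h.filter (· ∈ u)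
  rw [List.filter_eq_self.2 (by simp)] at hsub
  refine (hsub.eq_of_length_le ?_).symm
  exact ((hl.filter _).subperm fun x hx => by simpa using (List.mem_filter.1 hx).2).length_le

theorem eq_of_sublist_of_wordProd_eq {l s t : List ℕ} (hl : l.Nodup) (hv : ValidWord n l)
    (hs : s.Sublist l) (ht : t.Sublist l) (h : wordProd n s = wordProd n t) : s = t := by
  rw [← hs.filter_mem_eq hl, ← ht.filter_mem_eq hl]
  simp only [mem_iff_of_wordProd_eq (hs.nodup hl) (hv.sublist hs) (ht.nodup hl) (hv.sublist ht) h]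

theorem bruhat_wordProd_iff {l : List ℕ} (hl : l.Nodup) (hv : ValidWord n l)
    {y : Equiv.Perm (Fin n)} : Bruhat n y (wordProd n l) ↔ ∃ t, t.Sublist l ∧ wordProd n t = y := by
  refine ⟨fun h => h l (isReducedWord_of_nodup hl hv), ?_⟩
  rintro ⟨t, htl, rfl⟩ s hs
  refine ⟨s.filter (· ∈ t), List.filter_sublist, ?_⟩
  rw [← wordProd_filter_eq_of_wordProd_eq hl hv ((hs.perm_of_nodup hl hv).nodup_iff.1 hl) hs.1
    hs.2.1.symm, htl.filter_mem_eq hl]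

theorem bruhat_interval_iff {l t : List ℕ} (hl : l.Nodup) (hv : ValidWord n l)
    (ht : t.Sublist l) {y : Equiv.Perm (Fin n)} :
    Bruhat n (wordProd n t) y ∧ Bruhat n y (wordProd n l) ↔
      ∃ u, t.Sublist u ∧ u.Sublist l ∧ wordProd n u = y := by
  constructor
  · rintro ⟨hxy, hyw⟩
    obtain ⟨u, hul, rfl⟩ := (bruhat_wordProd_iff hl hv).1 hyw
    obtain ⟨v, hvu, hvt⟩ := (bruhat_wordProd_iff (hul.nodup hl) (hv.sublist hul)).1 hxy
    obtain rfl := eq_of_sublist_of_wordProd_eq hl hv (hvu.trans hul) ht hvt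
    exact ⟨u, hvu, hul, rfl⟩
  · rintro ⟨u, htu, hul, rfl⟩
    exact ⟨(bruhat_wordProd_iff (hul.nodup hl) (hv.sublist hul)).2 ⟨t, htu, rfl⟩,
      (bruhat_wordProd_iff hl hv).2 ⟨u, hul, rfl⟩⟩

def subwordUnion (l t : List ℕ) (F : Finset ℕ) : List ℕ :=
  l.filter (fun a => a ∈ t ∨ a ∈ F)

theorem mem_subwordUnion {l t : List ℕ} {F : Finset ℕ} {a : ℕ} :
    a ∈ subwordUnion l t F ↔ a ∈ l ∧ (a ∈ t ∨ a ∈ F) := by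
  simp [subwordUnion]

theorem subwordUnion_sublist (l t : List ℕ) (F : Finset ℕ) : (subwordUnion l t F).Sublist l :=
  List.filter_sublist

theorem sublist_subwordUnion {l t : List ℕ} (hl : l.Nodup) (ht : t.Sublist l) (F : Finset ℕ) :
    t.Sublist (subwordUnion l t F) := by
  have := (List.filter_sublist (p := (· ∈ t)) (l := subwordUnion l t F))
  rwa [subwordUnion, List.filter_filter, List.filter_congr (q := (· ∈ t)) (by simp +contextual),
    ht.filter_mem_eq hl] at this

theorem toFinset_subwordUnion {l t : List ℕ} (ht : t.Sublist l) {F : Finset ℕ}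
    (hF : F ⊆ l.toFinset \ t.toFinset) : (subwordUnion l t F).toFinset = t.toFinset ∪ F := by
  ext a
  simp only [List.mem_toFinset, mem_subwordUnion, Finset.mem_union]
  refine ⟨fun h => h.2, fun h => ⟨?_, h⟩⟩
  rcases h with h | h
  · exact ht.subset h
  · simpa using (Finset.mem_sdiff.1 (hF h)).1

theorem length_subwordUnion {l t : List ℕ} (hl : l.Nodup) (ht : t.Sublist l) {F : Finset ℕ}
    (hF : F ⊆ l.toFinset \ t.toFinset) : (subwordUnion l t F).length = t.length + F.card := by
  rw [← List.toFinset_card_of_nodup ((subwordUnion_sublist l t F).nodup hl),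
    toFinset_subwordUnion ht hF,
    Finset.card_union_of_disjoint (Finset.disjoint_of_subset_right hF Finset.disjoint_sdiff),
    List.toFinset_card_of_nodup (ht.nodup hl)]

open scoped Classical in
theorem sum_bruhat_interval {M : Type*} [AddCommMonoid M] {l t : List ℕ} (hl : l.Nodup)
    (hv : ValidWord n l) (ht : t.Sublist l) (f : Equiv.Perm (Fin n) → M) :
    (∑ y, if Bruhat n (wordProd n t) y ∧ Bruhat n y (wordProd n l) then f y else 0) =
      ∑ F ∈ (l.toFinset \ t.toFinset).powerset, f (wordProd n (subwordUnion l t F)) := by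
  rw [← Finset.sum_filter]
  refine (Finset.sum_nbij (fun F => wordProd n (subwordUnion l t F)) ?_ ?_ ?_ fun _ _ => rfl).symm
  · intro F _
    simpa using (bruhat_interval_iff hl hv ht).2
      ⟨_, sublist_subwordUnion hl ht F, subwordUnion_sublist l t F, rfl⟩
  · intro F hF G hG hFG
    have hFG := congrArg (fun u => u.toFinset \ t.toFinset) (eq_of_sublist_of_wordProd_eq hl hv
      (subwordUnion_sublist l t F) (subwordUnion_sublist l t G) hFG)
    simp only [Finset.coe_powerset, Set.mem_preimage, Set.mem_powerset_iff, Finset.coe_subset]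
      at hF hG
    simpa [toFinset_subwordUnion ht hF, toFinset_subwordUnion ht hG,
      Finset.union_sdiff_cancel_left (Finset.disjoint_of_subset_right hF Finset.disjoint_sdiff),
      Finset.union_sdiff_cancel_left (Finset.disjoint_of_subset_right hG Finset.disjoint_sdiff)]
      using hFG
  · rintro y hy
    obtain ⟨u, htu, hul, rfl⟩ := (bruhat_interval_iff hl hv ht).1 (by simpa using hy)
    refine ⟨u.toFinset \ t.toFinset, ?_, ?_⟩
    · exact Finset.mem_powerset.2 (Finset.sdiff_subset_sdiff
        (fun a ha => by simpa using hul.subset (List.mem_toFinset.1 ha)) (Finset.Subset.refl _))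
    · conv_rhs => rw [← hul.filter_mem_eq hl]
      refine congrArg _ (List.filter_congr fun a _ => ?_)
      by_cases hat : a ∈ t
      · simp [hat, htu.subset hat]
      · simp [hat]

theorem R_wordProd_of_sublist (R : Equiv.Perm (Fin n) → Equiv.Perm (Fin n) → Polynomial ℤ)
    (hR0 : ∀ x w : Equiv.Perm (Fin n), ¬ Bruhat n x w → R x w = 0)
    (hR1 : ∀ w : Equiv.Perm (Fin n), R w w = 1)
    (hRrec : ∀ (x w : Equiv.Perm (Fin n)) (i : ℕ), 1 ≤ i → i < n →
      len n (w * gen n i) < len n w →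
        (len n (x * gen n i) < len n x →
          R x w = R (x * gen n i) (w * gen n i)) ∧
        (len n x < len n (x * gen n i) →
          R x w = X * R (x * gen n i) (w * gen n i) + (X - 1) * R x (w * gen n i)))
    {t u : List ℕ} (hu : u.Nodup) (hv : ValidWord n u) (ht : t.Sublist u) :
    R (wordProd n t) (wordProd n u) = (X - 1) ^ (u.length - t.length) := by
  induction u using List.reverseRecOn generalizing t with
  | nil => simp [List.sublist_nil.1 ht, hR1]
  | append_singleton u i ih =>
    have hu' : u.Nodup := hu.sublist (List.sublist_append_left u [i])
    have hvu : ValidWord n u := hv.sublist (List.sublist_append_left u [i])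
    have hiu : i ∉ u := fun h => by simpa using List.disjoint_of_nodup_append hu h
    obtain ⟨hi1, hi2⟩ := hv i (by simp)
    have hcancel : ∀ s, wordProd n (s ++ [i]) * gen n i = wordProd n s := fun s => by
      rw [wordProd_concat, mul_assoc, gen_mul_self, mul_one]
    have hrec := hRrec (wordProd n t) (wordProd n (u ++ [i])) i hi1 hi2 (by
      rw [hcancel, len_wordProd_of_nodup hu' hvu, len_wordProd_of_nodup hu hv]; simp)
    obtain ⟨t, t', rfl, htu, ht'⟩ := List.sublist_append_iff.1 ht
    rcases List.sublist_singleton.1 ht' with rfl | rfl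
    · rw [List.append_nil] at hrec ⊢
      have hnd := hu.sublist (htu.append_right [i])
      have hvt := hv.sublist (htu.append_right [i])
      have hasc : len n (wordProd n t) < len n (wordProd n t * gen n i) := by
        rw [← wordProd_concat, len_wordProd_of_nodup hnd hvt,
          len_wordProd_of_nodup (htu.nodup hu') (hvu.sublist htu)]
        simp
      have hnot : ¬ Bruhat n (wordProd n (t ++ [i])) (wordProd n u) := by
        rw [bruhat_wordProd_iff hu' hvu]
        rintro ⟨s, hsu, hs⟩
        exact hiu (hsu.subset (mem_of_wordProd_eq hnd hvt hs (by simp)))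
      rw [hrec.2 hasc, hcancel, ← wordProd_concat, hR0 _ _ hnot, ih hu' hvu htu, List.length_append,
        List.length_singleton, Nat.sub_add_comm htu.length_le, pow_succ]
      ring
    · have hdesc : len n (wordProd n (t ++ [i]) * gen n i) < len n (wordProd n (t ++ [i])) := by
        rw [hcancel, len_wordProd_of_nodup (hu.sublist (htu.append_right [i]))
          (hv.sublist (htu.append_right [i])),
          len_wordProd_of_nodup (htu.nodup hu') (hvu.sublist htu)]
        simp
      rw [hrec.1 hdesc, hcancel, hcancel, ih hu' hvu htu]
      simp

theorem Polynomial.eq_one_of_reflect_eq {R : Type*} [Ring R] {p : R[X]} {d : ℕ}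
    (hd : 2 * p.natDegree + 1 ≤ d) (h : p.reflect d = X ^ d + (p - 1)) : p = 1 := by
  ext k
  rcases le_or_gt k p.natDegree with hk | hk
  · have hc := congrArg (coeff · k) h
    simp only [coeff_reflect, revAt_le (by omega : k ≤ d), coeff_add, coeff_sub, coeff_X_pow,
      if_neg (by omega : k ≠ d), zero_add] at hc
    rw [coeff_eq_zero_of_natDegree_lt (by omega : p.natDegree < d - k)] at hc
    exact sub_eq_zero.1 hc.symm
  · rw [coeff_eq_zero_of_natDegree_lt hk, coeff_one, if_neg (by omega)]

open scoped Classical in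
theorem sum_bruhat_interval_R_mul_P (R P : Equiv.Perm (Fin n) → Equiv.Perm (Fin n) → Polynomial ℤ)
    {l t : List ℕ} (hl : l.Nodup) (hv : ValidWord n l) (ht : t.Sublist l)
    (hR : ∀ u : List ℕ, t.Sublist u → u.Sublist l →
      R (wordProd n t) (wordProd n u) = (X - 1) ^ (u.length - t.length))
    (hP : ∀ u : List ℕ, u.Sublist l → t.length < u.length → P (wordProd n u) (wordProd n l) = 1) :
    (∑ y, if Bruhat n (wordProd n t) y ∧ Bruhat n y (wordProd n l)
      then R (wordProd n t) y * P y (wordProd n l) else 0) =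
      X ^ (l.length - t.length) + (P (wordProd n t) (wordProd n l) - 1) := by
  set D := l.toFinset \ t.toFinset
  have hD : D.card = l.length - t.length := by
    rw [Finset.card_sdiff_of_subset (fun a ha => by simpa using ht.subset (by simpa using ha)),
      List.toFinset_card_of_nodup hl, List.toFinset_card_of_nodup (ht.nodup hl)]
  have hterm : ∀ F ∈ D.powerset,
      R (wordProd n t) (wordProd n (subwordUnion l t F)) *
        P (wordProd n (subwordUnion l t F)) (wordProd n l) =
      (X - 1) ^ F.card + if F = ∅ then P (wordProd n t) (wordProd n l) - 1 else 0 := by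
    intro F hF
    have hlen := length_subwordUnion hl ht (Finset.mem_powerset.1 hF)
    rw [hR _ (sublist_subwordUnion hl ht F) (subwordUnion_sublist l t F), hlen,
      Nat.add_sub_cancel_left]
    split_ifs with hF0
    · subst hF0
      rw [show subwordUnion l t ∅ = t from ((sublist_subwordUnion hl ht ∅).eq_of_length
        (by simp [hlen])).symm, Finset.card_empty, pow_zero]
      ring
    · have hFpos := Finset.card_pos.2 (Finset.nonempty_iff_ne_empty.2 hF0)
      rw [hP _ (subwordUnion_sublist l t F) (by omega), mul_one, add_zero]
  have hbinom := Finset.sum_pow_mul_eq_add_pow (X - 1 : ℤ[X]) 1 D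
  rw [sub_add_cancel] at hbinom
  rw [sum_bruhat_interval hl hv ht, Finset.sum_congr rfl hterm, Finset.sum_add_distrib,
    Finset.sum_ite_eq', if_pos (Finset.empty_mem_powerset D), ← hD]
  simpa using hbinom

open scoped Classical in
theorem P_wordProd_eq_one (R P : Equiv.Perm (Fin n) → Equiv.Perm (Fin n) → Polynomial ℤ)
    {l : List ℕ} (hl : l.Nodup) (hv : ValidWord n l)
    (hR : ∀ t u : List ℕ, t.Sublist u → u.Sublist l →
      R (wordProd n t) (wordProd n u) = (X - 1) ^ (u.length - t.length))
    (hP1 : ∀ w : Equiv.Perm (Fin n), P w w = 1)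
    (hPdeg : ∀ x w : Equiv.Perm (Fin n), Bruhat n x w → x ≠ w →
      2 * (P x w).natDegree + 1 + len n x ≤ len n w)
    (hPbar : ∀ x w : Equiv.Perm (Fin n), Bruhat n x w →
      (P x w).reflect (len n w - len n x) =
        ∑ y : Equiv.Perm (Fin n),
          (if Bruhat n x y ∧ Bruhat n y w then R x y * P y w else 0))
    {t : List ℕ} (ht : t.Sublist l) : P (wordProd n t) (wordProd n l) = 1 := by
  induction hd : l.length - t.length using Nat.strong_induction_on generalizing t with
  | _ d ih =>
  rcases ht.length_le.eq_or_lt with heq | hlt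
  · rw [ht.eq_of_length heq, hP1]
  have hlen_t := len_wordProd_of_nodup (ht.nodup hl) (hv.sublist ht)
  have hlen_l := len_wordProd_of_nodup hl hv
  have hx : Bruhat n (wordProd n t) (wordProd n l) := (bruhat_wordProd_iff hl hv).2 ⟨t, ht, rfl⟩
  have hne : wordProd n t ≠ wordProd n l := fun h => by
    have := congrArg (len n) h
    omega
  have hdeg := hPdeg _ _ hx hne
  have hbar := hPbar _ _ hx
  rw [hlen_t, hlen_l] at hdeg hbar
  rw [sum_bruhat_interval_R_mul_P R P hl hv ht (hR t) fun u hul htu =>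
    ih _ (by omega) hul rfl] at hbar
  exact Polynomial.eq_one_of_reflect_eq (by omega) hbar

end

-- `reflect` encodes the bar-invariance equation `q^{ℓ(w)-ℓ(x)} P_{x,w}(q⁻¹) = Σ_y R_{x,y} P_{y,w}`.
open scoped Classical in
theorem stmt10_general (n : ℕ)
    (R P : Equiv.Perm (Fin n) → Equiv.Perm (Fin n) → Polynomial ℤ)
    (hR0 : ∀ x w : Equiv.Perm (Fin n), ¬ Bruhat n x w → R x w = 0)
    (hR1 : ∀ w : Equiv.Perm (Fin n), R w w = 1)
    (hRrec : ∀ (x w : Equiv.Perm (Fin n)) (i : ℕ), 1 ≤ i → i < n →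
      len n (w * gen n i) < len n w →
        (len n (x * gen n i) < len n x →
          R x w = R (x * gen n i) (w * gen n i)) ∧
        (len n x < len n (x * gen n i) →
          R x w = X * R (x * gen n i) (w * gen n i) + (X - 1) * R x (w * gen n i)))
    (hP1 : ∀ w : Equiv.Perm (Fin n), P w w = 1)
    (hPdeg : ∀ x w : Equiv.Perm (Fin n), Bruhat n x w → x ≠ w →
      2 * (P x w).natDegree + 1 + len n x ≤ len n w)
    (hPbar : ∀ x w : Equiv.Perm (Fin n), Bruhat n x w →
      (P x w).reflect (len n w - len n x) =
        ∑ y : Equiv.Perm (Fin n),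
          (if Bruhat n x y ∧ Bruhat n y w then R x y * P y w else 0))
    (w : Equiv.Perm (Fin n)) (l : List ℕ) (hl : IsReducedWord n w l) (hnd : l.Nodup)
    (x : Equiv.Perm (Fin n)) (hx : Bruhat n x w) :
    P x w = 1 := by
  obtain ⟨hv, rfl, -⟩ := hl
  obtain ⟨t, ht, rfl⟩ := (bruhat_wordProd_iff hnd hv).1 hx
  exact P_wordProd_eq_one R P hnd hv
    (fun t u htu hul => R_wordProd_of_sublist R hR0 hR1 hRrec (hul.nodup hnd)
      (ValidWord.sublist hv hul) htu)
    hP1 hPdeg hPbar ht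

open scoped Classical in
/-- if `w` has a reduced word with pairwise distinct letters, then
`P_{x,w} = 1` for all `x ≤ w`.  The Kazhdan-Lusztig polynomials `P` are axiomatized via
the R-polynomials `R` and the defining properties (support, normalization, degree bound,
and the bar-invariance functional equation `q^{ℓ(w)-ℓ(x)} P_{x,w}(q⁻¹) = Σ_y R_{x,y} P_{y,w}`). -/
theorem stmt10 (n : ℕ)
    (R P : Equiv.Perm (Fin n) → Equiv.Perm (Fin n) → Polynomial ℤ)
    (hR0 : ∀ x w : Equiv.Perm (Fin n), ¬ Bruhat n x w → R x w = 0)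
    (hR1 : ∀ w : Equiv.Perm (Fin n), R w w = 1)
    (hRrec : ∀ (x w : Equiv.Perm (Fin n)) (i : ℕ), 1 ≤ i → i < n →
      len n (w * gen n i) < len n w →
        (len n (x * gen n i) < len n x →
          R x w = R (x * gen n i) (w * gen n i)) ∧
        (len n x < len n (x * gen n i) →
          R x w = X * R (x * gen n i) (w * gen n i) + (X - 1) * R x (w * gen n i)))
    (hP0 : ∀ x w : Equiv.Perm (Fin n), ¬ Bruhat n x w → P x w = 0)
    (hP1 : ∀ w : Equiv.Perm (Fin n), P w w = 1)
    (hPdeg : ∀ x w : Equiv.Perm (Fin n), Bruhat n x w → x ≠ w →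
      2 * (P x w).natDegree + 1 + len n x ≤ len n w)
    (hPbar : ∀ x w : Equiv.Perm (Fin n), Bruhat n x w →
      (P x w).reflect (len n w - len n x) =
        ∑ y : Equiv.Perm (Fin n),
          (if Bruhat n x y ∧ Bruhat n y w then R x y * P y w else 0))
    (w : Equiv.Perm (Fin n)) (l : List ℕ) (hl : IsReducedWord n w l) (hnd : l.Nodup)
    (x : Equiv.Perm (Fin n)) (hx : Bruhat n x w) :
    P x w = 1 :=
  stmt10_general n R P hR0 hR1 hRrec hP1 hPdeg hPbar w l hl hnd x hx
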